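/- In the literal-free setting, every mapping of the rule antecedent into the critical instance is dominated by a more general mapping obtained from the sandbox rewriting: for every m ∈ ⟦A⟧_{C(S,r)} there exist a conjunctive query q ∈ Q(A) and a mapping m* ∈ ⟦q⟧_{S(S)} with dom(m*) = dom(m) such that for every variable ?v, either m*(?v) = m(?v) or m*(?v) = λ. -/

import Mathlib

/-- An RDF node: a URI or a literal. -/
inductive RNode where
  | uri : ℕ → RNode
  | lit : ℕ → RNode
deriving DecidableEq

/-- A term of a triple pattern: a constant (URI or literal) or a variable. -/
inductive RTerm where
  | cst : RNode → RTerm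
  | var : ℕ → RTerm
deriving DecidableEq

abbrev Triple := RNode × RNode × RNode
abbrev TPat := RTerm × RTerm × RTerm

def RNode.isLit : RNode → Prop
  | .lit _ => True
  | .uri _ => False

def applyT (m : ℕ → RNode) : RTerm → RNode
  | .cst c => c
  | .var v => m v

def applyTriple (m : ℕ → RNode) (p : TPat) : Triple :=
  (applyT m p.1, applyT m p.2.1, applyT m p.2.2)

/-- Variable `v` occurs in triple pattern `p`. -/
def occursIn (v : ℕ) (p : TPat) : Prop :=
  p.1 = RTerm.var v ∨ p.2.1 = RTerm.var v ∨ p.2.2 = RTerm.var v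

def varsPat (P : Set TPat) : Set ℕ := { v | ∃ p ∈ P, occursIn v p }

def constIn (c : RNode) (p : TPat) : Prop :=
  p.1 = RTerm.cst c ∨ p.2.1 = RTerm.cst c ∨ p.2.2 = RTerm.cst c

def constsPat (P : Set TPat) : Set RNode := { c | ∃ p ∈ P, constIn c p }

def constsGraph (I : Set Triple) : Set RNode :=
  { c | ∃ t ∈ I, t.1 = c ∨ t.2.1 = c ∨ t.2.2 = c }

/-- `I` is an instance of the triplestore schema `⟨G, Δ⟩`: every triple of `I`
is the image of some pattern of `G` under a mapping that binds no variable of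
the no-literal set `Δ` (occurring in the pattern) to a literal. -/
def isInstance (G : Set TPat) (Δ : Set ℕ) (I : Set Triple) : Prop :=
  ∀ t ∈ I, ∃ p ∈ G, ∃ m : ℕ → RNode,
    applyTriple m p = t ∧ ∀ v ∈ Δ, occursIn v p → ¬ (m v).isLit

/-- The sandbox graph: every variable of every pattern replaced by `lam`. -/
def sandbox (G : Set TPat) (lam : RNode) : Set Triple :=
  (applyTriple (fun _ => lam)) '' G

/-- The critical instance of a schema `⟨G, Δ⟩` w.r.t. a set of constants `K`:
all triples obtained from a pattern of `G` by replacing each variable with a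
constant of `K`, which must not be a literal unless it is in the object
position and the variable there is not in `Δ`. -/
def critical (G : Set TPat) (Δ : Set ℕ) (K : Set RNode) : Set Triple :=
  { t | ∃ p ∈ G, ∃ m : ℕ → RNode, applyTriple m p = t ∧
      (∀ v, p.1 = RTerm.var v → m v ∈ K ∧ ¬ (m v).isLit) ∧
      (∀ v, p.2.1 = RTerm.var v → m v ∈ K ∧ ¬ (m v).isLit) ∧
      (∀ v, p.2.2 = RTerm.var v → m v ∈ K ∧ (v ∈ Δ → ¬ (m v).isLit)) }

/-- One position of a rewriting: kept unchanged or replaced with `lam`. -/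
def rewriteT (lam : RNode) (a b : RTerm) : Prop := b = a ∨ b = RTerm.cst lam

/-- `q` is obtained from the triple pattern `p` by replacing any subset of its
three positions with the fresh constant `lam`. -/
def rewriteTriple (lam : RNode) (p q : TPat) : Prop :=
  rewriteT lam p.1 q.1 ∧ rewriteT lam p.2.1 q.2.1 ∧ rewriteT lam p.2.2 q.2.2

/-- No literal occurs among the constants of a graph pattern. -/
def litFree (P : Set TPat) : Prop := ∀ c ∈ constsPat P, ¬ c.isLit

/-! The dominating mapping keeps every value of `m` that is a constant of the sandbox graph and
sends all other variables to `λ`. For a pattern `p ∈ A`, the critical triple `m(p)` is an image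
of some schema pattern `g ∈ G`; replacing by `λ` each position of `p` where `g` has a variable,
the modified mapping sends the resulting rewriting of `p` exactly onto the sandbox triple of `g`:
at the remaining positions `g` has a constant, which is a constant of the sandbox graph, so there
`m` is unchanged. -/

lemma exists_pattern_of_mem_critical {G : Set TPat} {Δ : Set ℕ} {K : Set RNode} {t : Triple}
    (ht : t ∈ critical G Δ K) : ∃ g ∈ G, ∃ mg : ℕ → RNode, applyTriple mg g = t := by
  obtain ⟨g, hg, mg, hmg, -⟩ := ht
  exact ⟨g, hg, mg, hmg⟩

lemma mem_constsGraph_of_mem {I : Set Triple} {t : Triple} (ht : t ∈ I) :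
    t.1 ∈ constsGraph I ∧ t.2.1 ∈ constsGraph I ∧ t.2.2 ∈ constsGraph I :=
  ⟨⟨t, ht, .inl rfl⟩, ⟨t, ht, .inr (.inl rfl)⟩, ⟨t, ht, .inr (.inr rfl)⟩⟩

lemma applyTriple_const_mem_sandbox {G : Set TPat} {g : TPat} (lam : RNode) (hg : g ∈ G) :
    applyTriple (fun _ => lam) g ∈ sandbox G lam :=
  ⟨g, hg, rfl⟩

lemma applyT_const_eq_or (lam : RNode) (mg : ℕ → RNode) (gt : RTerm) :
    applyT (fun _ => lam) gt = lam ∨ applyT (fun _ => lam) gt = applyT mg gt := by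
  cases gt <;> simp [applyT]

def generalizeT (lam : RNode) : RTerm → RTerm → RTerm
  | .var _, _ => .cst lam
  | .cst _, pt => pt

def generalizeTriple (lam : RNode) (g p : TPat) : TPat :=
  (generalizeT lam g.1 p.1, generalizeT lam g.2.1 p.2.1, generalizeT lam g.2.2 p.2.2)

lemma rewriteT_generalizeT (lam : RNode) (gt pt : RTerm) :
    rewriteT lam pt (generalizeT lam gt pt) := by
  cases gt <;> simp [generalizeT, rewriteT]

lemma rewriteTriple_generalizeTriple (lam : RNode) (g p : TPat) :
    rewriteTriple lam p (generalizeTriple lam g p) :=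
  ⟨rewriteT_generalizeT .., rewriteT_generalizeT .., rewriteT_generalizeT ..⟩

open Classical in
noncomputable def generalizeMap (S : Set RNode) (lam : RNode) (m : ℕ → RNode) (v : ℕ) : RNode :=
  if m v ∈ S then m v else lam

section generalizeMap

variable {S : Set RNode} {lam : RNode} {m mg : ℕ → RNode}

lemma generalizeMap_eq_or (v : ℕ) :
    generalizeMap S lam m v = m v ∨ generalizeMap S lam m v = lam := by
  unfold generalizeMap
  split_ifs <;> simp

lemma generalizeMap_of_mem {v : ℕ} (hv : m v ∈ S) : generalizeMap S lam m v = m v := by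
  simp [generalizeMap, hv]

lemma generalizeMap_mem {v : ℕ} (h : m v ∈ S ∨ lam ∈ S) : generalizeMap S lam m v ∈ S := by
  unfold generalizeMap
  split_ifs with hv
  · exact hv
  · exact h.resolve_left hv

lemma applyT_generalizeMap_generalizeT {gt pt : RTerm} (h : applyT mg gt = applyT m pt)
    (hmem : applyT (fun _ => lam) gt ∈ S) :
    applyT (generalizeMap S lam m) (generalizeT lam gt pt) = applyT (fun _ => lam) gt := by
  cases gt with
  | var => rfl
  | cst c =>
    cases pt with
    | cst => exact h.symm
    | var v =>
      change c = m v at h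
      change c ∈ S at hmem
      exact (generalizeMap_of_mem (h ▸ hmem)).trans h.symm

lemma mem_or_of_applyT_eq {gt : RTerm} {v : ℕ} (h : applyT mg gt = m v)
    (hmem : applyT (fun _ => lam) gt ∈ S) : m v ∈ S ∨ lam ∈ S := by
  rcases applyT_const_eq_or lam mg gt with e | e
  · exact .inr (e ▸ hmem)
  · exact .inl (h ▸ e ▸ hmem)

variable {I : Set Triple} {g p : TPat}

lemma applyTriple_generalizeMap_generalizeTriple (h : applyTriple mg g = applyTriple m p)
    (hg : applyTriple (fun _ => lam) g ∈ I) :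
    applyTriple (generalizeMap (constsGraph I) lam m) (generalizeTriple lam g p) =
      applyTriple (fun _ => lam) g := by
  obtain ⟨h₁, h₂, h₃⟩ := mem_constsGraph_of_mem hg
  simp only [applyTriple, Prod.mk.injEq] at h
  obtain ⟨e₁, e₂, e₃⟩ := h
  simp only [applyTriple, generalizeTriple, applyT_generalizeMap_generalizeT e₁ h₁,
    applyT_generalizeMap_generalizeT e₂ h₂, applyT_generalizeMap_generalizeT e₃ h₃]

lemma generalizeMap_mem_of_occursIn {v : ℕ} (h : applyTriple mg g = applyTriple m p)
    (hg : applyTriple (fun _ => lam) g ∈ I) (hv : occursIn v p) :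
    generalizeMap (constsGraph I) lam m v ∈ constsGraph I := by
  obtain ⟨h₁, h₂, h₃⟩ := mem_constsGraph_of_mem hg
  simp only [applyTriple, Prod.mk.injEq] at h
  obtain ⟨e₁, e₂, e₃⟩ := h
  apply generalizeMap_mem
  rcases hv with hv | hv | hv
  · exact mem_or_of_applyT_eq (by rw [e₁, hv]; rfl) h₁
  · exact mem_or_of_applyT_eq (by rw [e₂, hv]; rfl) h₂
  · exact mem_or_of_applyT_eq (by rw [e₃, hv]; rfl) h₃

end generalizeMap

theorem critical_mapping_dominated_general (G A : Set TPat)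
    (lam : RNode)
    (K : Set RNode)
    (m : ℕ → RNode)
    (hm : ∀ p ∈ A, applyTriple m p ∈ critical G (varsPat G) K) :
    ∃ (f : TPat → TPat) (m' : ℕ → RNode),
      (∀ p ∈ A, rewriteTriple lam p (f p)) ∧
      (∀ p ∈ A, applyTriple m' (f p) ∈ sandbox G lam) ∧
      (∀ v ∈ varsPat A, m' v ∈ constsGraph (sandbox G lam)) ∧
      (∀ v : ℕ, m' v = m v ∨ m' v = lam) := by
  classical
  choose g hg mg hmg using fun p hp => exists_pattern_of_mem_critical (hm p hp)
  have hsb p hp := applyTriple_const_mem_sandbox lam (hg p hp)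
  refine ⟨fun p => if hp : p ∈ A then generalizeTriple lam (g p hp) p else p,
    generalizeMap (constsGraph (sandbox G lam)) lam m, fun p hp => ?_, fun p hp => ?_, ?_,
    generalizeMap_eq_or⟩
  · simpa only [dif_pos hp] using rewriteTriple_generalizeTriple lam (g p hp) p
  · simp only [dif_pos hp]
    rw [applyTriple_generalizeMap_generalizeTriple (hmg p hp) (hsb p hp)]
    exact hsb p hp
  · rintro v ⟨p, hp, hv⟩
    exact generalizeMap_mem_of_occursIn (hmg p hp) (hsb p hp) hv

/-- In the literal-free setting, every mapping `m` of the
antecedent `A` into the critical instance is dominated by a more general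
mapping `m*` of some rewriting `q ∈ Q(A)` into the sandbox graph: for every
variable, either `m*(?v) = m(?v)` or `m*(?v) = λ`. -/
theorem critical_mapping_dominated (G A : Set TPat)
    (n : ℕ) (lam : RNode) (hlam : lam = RNode.uri n)
    (hG : litFree G) (hA : litFree A)
    (hfresh : lam ∉ constsPat G ∪ constsPat A)
    (huniq : ∀ v : ℕ, ∀ p₁ ∈ G, ∀ p₂ ∈ G, occursIn v p₁ → occursIn v p₂ → p₁ = p₂)
    (K : Set RNode) (hK : K = constsPat G ∪ constsPat A ∪ {lam})
    (m : ℕ → RNode)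
    (hm : ∀ p ∈ A, applyTriple m p ∈ critical G (varsPat G) K)
    (hmc : ∀ v ∈ varsPat A, m v ∈ constsGraph (critical G (varsPat G) K)) :
    ∃ (f : TPat → TPat) (m' : ℕ → RNode),
      (∀ p ∈ A, rewriteTriple lam p (f p)) ∧
      (∀ p ∈ A, applyTriple m' (f p) ∈ sandbox G lam) ∧
      (∀ v ∈ varsPat A, m' v ∈ constsGraph (sandbox G lam)) ∧
      (∀ v : ℕ, m' v = m v ∨ m' v = lam) :=
  critical_mapping_dominated_general G A lam K m hm
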